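/- Under the standing assumptions on P and 𝒟, for every p ∈ P the open neighbourhood B(T(p), cM/(d+1)) is contained in the interior of S(p). -/

import Mathlib

/-!
Let `x ∈ T(p, τ)` and `‖y - x‖ < cM/(d+1)`. In a cell `σ` through `p`, the barycentric coordinate
of `p` is an affine function equal to `1` at `p` and vanishing on the affine span of the opposite
facet, which by (v) lies at distance `> cM` from `p`; hence it is `1/(cM)`-Lipschitz. On `T(p, τ)`
it is at least `1/(d+1)`. Because cells meet face to face, these coordinates agree on common
faces, and a point where the coordinate of `p` is positive lies in no cell avoiding `p`; as the
cells are locally finite, the cells through `p` then cover a neighbourhood of that point.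
Continuous induction along the segment from `x` to `y` keeps `y` in such cells, with coordinate
of `p` at least `1/(d+1) - ‖y - x‖/(cM) > 0`. So the open ball `B(x, cM/(d+1))` lies in `S(p)`,
hence in its interior.
-/

noncomputable section

open scoped Classical

open Metric

variable {d : ℕ}

/-- `P` is `M`-separated. -/
def IsSeparatedSet (M : ℝ) (P : Set (EuclideanSpace ℝ (Fin d))) : Prop :=
  ∀ p ∈ P, ∀ q ∈ P, p ≠ q → M ≤ dist p q

/-- `P` is `M`-syndetic. -/
def IsSyndeticSet (M : ℝ) (P : Set (EuclideanSpace ℝ (Fin d))) : Prop :=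
  ∀ x : EuclideanSpace ℝ (Fin d), ∃ p ∈ P, dist x p < M

/-- `T(p,τ)`: the points of `Conv(τ)` whose barycentric coordinate at `p`
is maximal. -/
def Tcell (τ : Finset (EuclideanSpace ℝ (Fin d))) (p : EuclideanSpace ℝ (Fin d)) :
    Set (EuclideanSpace ℝ (Fin d)) :=
  {x | ∃ lam : EuclideanSpace ℝ (Fin d) → ℝ,
    (∀ q ∈ τ, 0 ≤ lam q) ∧ (∑ q ∈ τ, lam q) = 1 ∧ (∀ q ∈ τ, lam q ≤ lam p) ∧
    x = ∑ q ∈ τ, lam q • q}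

/-- `T(p) = ⋃_{τ ∈ 𝒟, p ∈ τ} T(p,τ)`. -/
def Tset (𝒟 : Set (Finset (EuclideanSpace ℝ (Fin d)))) (p : EuclideanSpace ℝ (Fin d)) :
    Set (EuclideanSpace ℝ (Fin d)) :=
  ⋃ τ ∈ {τ ∈ 𝒟 | p ∈ τ}, Tcell τ p

/-- `S(p) = ⋃_{τ ∈ 𝒟, p ∈ τ} Conv(τ)`. -/
def Sset (𝒟 : Set (Finset (EuclideanSpace ℝ (Fin d)))) (p : EuclideanSpace ℝ (Fin d)) :
    Set (EuclideanSpace ℝ (Fin d)) :=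
  ⋃ τ ∈ {τ ∈ 𝒟 | p ∈ τ}, convexHull ℝ (↑τ : Set (EuclideanSpace ℝ (Fin d)))

/-- Standing assumptions: `P` is `M`-separated and `2M`-syndetic and `𝒟` is a
collection of `(d+1)`-element affinely independent subsets of `P` such that:
(i) the sets `Conv(τ)`, `τ ∈ 𝒟`, cover `ℝ^d` with pairwise disjoint interiors;
(ii) any two cells meet face to face; (iii) every `p ∈ P` lies in some `τ ∈ 𝒟`;
(iv) every `τ ∈ 𝒟` lies in a closed ball of radius `< √5·M`;
(v) `d(p, H(τ∖{p})) > c·M` for every `τ ∈ 𝒟` and `p ∈ τ`. -/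
def Standing (M c : ℝ) (P : Set (EuclideanSpace ℝ (Fin d)))
    (𝒟 : Set (Finset (EuclideanSpace ℝ (Fin d)))) : Prop :=
  IsSeparatedSet M P ∧ IsSyndeticSet (2 * M) P ∧
  (∀ τ ∈ 𝒟, τ.card = d + 1 ∧ (↑τ : Set (EuclideanSpace ℝ (Fin d))) ⊆ P ∧
    AffineIndependent ℝ (fun q : (τ : Set (EuclideanSpace ℝ (Fin d))) =>
      (q : EuclideanSpace ℝ (Fin d)))) ∧
  (⋃ τ ∈ 𝒟, convexHull ℝ (↑τ : Set (EuclideanSpace ℝ (Fin d)))) = Set.univ ∧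
  (∀ τ ∈ 𝒟, ∀ τ' ∈ 𝒟, τ ≠ τ' →
    interior (convexHull ℝ (↑τ : Set (EuclideanSpace ℝ (Fin d)))) ∩
      interior (convexHull ℝ (↑τ' : Set (EuclideanSpace ℝ (Fin d)))) = ∅) ∧
  (∀ τ ∈ 𝒟, ∀ τ' ∈ 𝒟,
    convexHull ℝ (↑τ : Set (EuclideanSpace ℝ (Fin d))) ∩
      convexHull ℝ (↑τ' : Set (EuclideanSpace ℝ (Fin d)))
    = convexHull ℝ (↑(τ ∩ τ') : Set (EuclideanSpace ℝ (Fin d)))) ∧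
  (∀ p ∈ P, ∃ τ ∈ 𝒟, p ∈ τ) ∧
  (∀ τ ∈ 𝒟, ∃ z r, r < Real.sqrt 5 * M ∧
    (↑τ : Set (EuclideanSpace ℝ (Fin d))) ⊆ closedBall z r) ∧
  (∀ τ ∈ 𝒟, ∀ p ∈ τ,
    c * M < Metric.infDist p
      (affineSpan ℝ (↑(τ.erase p) : Set (EuclideanSpace ℝ (Fin d)))
        : Set (EuclideanSpace ℝ (Fin d))))

open Set Filter Topology Bornology

section LocalFiniteness

theorem finite_inter_of_pairwise_le_dist {X : Type*} [MetricSpace X] [ProperSpace X] {M : ℝ}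
    (hM : 0 < M) {P K : Set X}
    (hP : P.Pairwise fun x y => M ≤ dist x y) (hK : IsBounded K) : (K ∩ P).Finite := by
  refine finite_isBounded_inter_isClosed ?_ hK (isClosed_of_pairwise_le_dist hM hP)
  refine isDiscrete_iff_forall_mem_exists_isOpen.2 fun y hy => ⟨ball y M, isOpen_ball, ?_⟩
  ext z
  refine ⟨fun ⟨hzy, hz⟩ => ?_, fun hz => by rw [hz]; exact ⟨mem_ball_self hM, hy⟩⟩
  by_contra hne
  exact (hP hz hy hne).not_gt hzy

variable {E : Type*} [NormedAddCommGroup E] [NormedSpace ℝ E] [ProperSpace E]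

theorem finite_setOf_convexHull_inter_nonempty {M R : ℝ} (hM : 0 < M) {P K : Set E}
    (hP : P.Pairwise fun x y => M ≤ dist x y) {𝒟 : Set (Finset E)}
    (h𝒟P : ∀ τ ∈ 𝒟, (τ : Set E) ⊆ P) (h𝒟R : ∀ τ ∈ 𝒟, ∃ z, (τ : Set E) ⊆ closedBall z R)
    (hK : IsBounded K) : {τ ∈ 𝒟 | (convexHull ℝ (τ : Set E) ∩ K).Nonempty}.Finite := by
  have hV := finite_inter_of_pairwise_le_dist hM hP (hK.cthickening (δ := 2 * R))
  refine (hV.finite_subsets.preimage Finset.coe_injective.injOn).subset ?_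
  rintro τ ⟨hτ, y, hy, hyK⟩ q hq
  obtain ⟨z, hz⟩ := h𝒟R τ hτ
  have hyz : y ∈ closedBall z R := convexHull_min hz (convex_closedBall z R) hy
  refine ⟨mem_cthickening_of_dist_le q y _ K hyK ?_, h𝒟P τ hτ hq⟩
  calc dist q y ≤ dist q z + dist y z := dist_triangle_right q y z
    _ ≤ 2 * R := by linarith [mem_closedBall.1 (hz hq), mem_closedBall.1 hyz]

end LocalFiniteness

section BarycentricCoordinate

variable {E : Type*} [NormedAddCommGroup E] [NormedSpace ℝ E]

theorem AffineMap.apply_sum_smul {ι F : Type*} [AddCommGroup F] [Module ℝ F]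
    (f : E →ᵃ[ℝ] F) {s : Finset ι} {w : ι → ℝ} (hw : ∑ i ∈ s, w i = 1) (v : ι → E) :
    f (∑ i ∈ s, w i • v i) = ∑ i ∈ s, w i • f (v i) := by
  rw [← s.affineCombination_eq_linear_combination v w hw, s.map_affineCombination v w hw,
    s.affineCombination_eq_linear_combination _ w hw]
  rfl

theorem AffineMap.mul_abs_sub_le_dist (f : E →ᵃ[ℝ] ℝ) {p : E} (hp : f p = 1) {r : ℝ}
    (hr : ∀ z, f z = 0 → r ≤ dist p z) (a b : E) : r * |f a - f b| ≤ dist a b := by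
  set s := f a - f b
  rcases eq_or_ne s 0 with hs | hs
  · simp [hs]
  -- the point of the line through `p` parallel to `b - a` where `f` vanishes
  have hz : f (s⁻¹ • (b - a) + p) = 0 := by
    have hlin : f.linear (b - a) = -s := by
      rw [← vsub_eq_sub, f.linearMap_vsub]
      simp [s]
    rw [← vadd_eq_add, f.map_vadd, hp, f.linear.map_smul, hlin, smul_eq_mul, vadd_eq_add,
      mul_neg, inv_mul_cancel₀ hs]
    ring
  have hdist : dist p (s⁻¹ • (b - a) + p) = dist a b / |s| := by
    rw [dist_eq_norm, sub_add_cancel_right, norm_neg, norm_smul, norm_inv, Real.norm_eq_abs,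
      ← dist_eq_norm, dist_comm, inv_mul_eq_div]
  have := hr _ hz
  rw [hdist, le_div_iff₀ (abs_pos.2 hs)] at this
  exact this

variable {τ : Finset E} {p : E}

def Finset.toAffineBasis (hind : AffineIndependent ℝ ((↑) : ↥(τ : Set E) → E))
    (htop : affineSpan ℝ (τ : Set E) = ⊤) : AffineBasis ↥(τ : Set E) ℝ E :=
  ⟨(↑), hind, by rwa [Subtype.range_coe]⟩

@[simp]
theorem Finset.coe_toAffineBasis (hind : AffineIndependent ℝ ((↑) : ↥(τ : Set E) → E))
    (htop : affineSpan ℝ (τ : Set E) = ⊤) : ⇑(τ.toAffineBasis hind htop) = (↑) :=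
  rfl

variable (τ p) in
/-- The barycentric coordinate of the vertex `p` of the simplex `τ`; junk value `0` unless `τ` is
an affine basis of `E` containing `p`. -/
def baryCoord : E →ᵃ[ℝ] ℝ :=
  if h : AffineIndependent ℝ ((↑) : ↥(τ : Set E) → E) ∧ affineSpan ℝ (τ : Set E) = ⊤ ∧ p ∈ τ
  then (τ.toAffineBasis h.1 h.2.1).coord ⟨p, h.2.2⟩
  else 0

theorem baryCoord_of_notMem (hp : p ∉ τ) : baryCoord τ p = 0 :=
  dif_neg fun h => hp h.2.2

section
variable (hind : AffineIndependent ℝ ((↑) : ↥(τ : Set E) → E))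
  (htop : affineSpan ℝ (τ : Set E) = ⊤) (hp : p ∈ τ)
include hind htop hp

theorem baryCoord_apply_of_mem {q : E} (hq : q ∈ τ) :
    baryCoord τ p q = if p = q then 1 else 0 := by
  rw [baryCoord, dif_pos ⟨hind, htop, hp⟩]
  by_cases hpq : p = q
  · subst hpq
    rw [if_pos rfl]
    exact (τ.toAffineBasis hind htop).coord_apply_eq ⟨p, hp⟩
  · rw [if_neg hpq]
    exact (τ.toAffineBasis hind htop).coord_apply_ne (i := ⟨p, hp⟩) (j := ⟨q, hq⟩)
      fun h => hpq (congrArg Subtype.val h)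

theorem baryCoord_sum_smul {ρ : Finset E} (hρ : ρ ⊆ τ) {w : E → ℝ} (hw : ∑ q ∈ ρ, w q = 1) :
    baryCoord τ p (∑ q ∈ ρ, w q • q) = if p ∈ ρ then w p else 0 := by
  rw [AffineMap.apply_sum_smul _ hw,
    Finset.sum_congr rfl fun q hq => by rw [baryCoord_apply_of_mem hind htop hp (hρ hq)]]
  simp

theorem mem_affineSpan_erase_of_baryCoord_eq_zero [DecidableEq E] {y : E}
    (hy : baryCoord τ p y = 0) : y ∈ affineSpan ℝ (τ.erase p : Set E) := by
  let b := τ.toAffineBasis hind htop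
  rw [baryCoord, dif_pos ⟨hind, htop, hp⟩] at hy
  have hspan := affineCombination_mem_affineSpan_image (b.sum_coord_apply_eq_one y)
    (s' := {i | (i : E) ≠ p}) (fun i _ hi => by
      rw [show i = ⟨p, hp⟩ from Subtype.ext (not_not.1 hi)]; exact hy) b
  rw [b.affineCombination_coord_eq_self, Finset.coe_toAffineBasis] at hspan
  convert hspan using 3
  ext q
  simp [and_comm]

theorem baryCoord_mul_abs_sub_le_dist [DecidableEq E] {r : ℝ}
    (hr : r ≤ infDist p (affineSpan ℝ (τ.erase p : Set E) : Set E)) (a b : E) :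
    r * |baryCoord τ p a - baryCoord τ p b| ≤ dist a b := by
  refine AffineMap.mul_abs_sub_le_dist _ (p := p) ?_ (fun z hz => ?_) a b
  · simpa using baryCoord_apply_of_mem hind htop hp hp
  · exact hr.trans (infDist_le_dist_of_mem
      (mem_affineSpan_erase_of_baryCoord_eq_zero hind htop hp hz))

end

/-- If `p ∉ σ'`, both sides vanish, the right one by the junk convention. -/
theorem baryCoord_eq_of_mem_convexHull_inter [DecidableEq E] {σ σ' : Finset E}
    (hind : AffineIndependent ℝ ((↑) : ↥(σ : Set E) → E)) (htop : affineSpan ℝ (σ : Set E) = ⊤)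
    (hind' : AffineIndependent ℝ ((↑) : ↥(σ' : Set E) → E))
    (htop' : affineSpan ℝ (σ' : Set E) = ⊤) (hp : p ∈ σ)
    (hface : convexHull ℝ (σ : Set E) ∩ convexHull ℝ (σ' : Set E)
      = convexHull ℝ (↑(σ ∩ σ') : Set E))
    {u : E} (hu : u ∈ convexHull ℝ (σ : Set E)) (hu' : u ∈ convexHull ℝ (σ' : Set E)) :
    baryCoord σ p u = baryCoord σ' p u := by
  have hmem : u ∈ convexHull ℝ (↑(σ ∩ σ') : Set E) := hface ▸ ⟨hu, hu'⟩
  obtain ⟨w, -, hw, rfl⟩ := (Finset.convexHull_eq _).subset hmem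
  simp only [Finset.centerMass_eq_of_sum_1 _ _ hw, id]
  rw [baryCoord_sum_smul hind htop hp Finset.inter_subset_left hw]
  by_cases hp' : p ∈ σ'
  · rw [baryCoord_sum_smul hind' htop' hp' Finset.inter_subset_right hw]
  · simp [baryCoord_of_notMem hp', hp']

end BarycentricCoordinate

section Triangulation

variable {M c : ℝ} {P : Set (EuclideanSpace ℝ (Fin d))}
  {𝒟 : Set (Finset (EuclideanSpace ℝ (Fin d)))} {p : EuclideanSpace ℝ (Fin d)}

namespace Standing

theorem affineIndependent (hS : Standing M c P 𝒟) {τ : Finset (EuclideanSpace ℝ (Fin d))}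
    (hτ : τ ∈ 𝒟) :
    AffineIndependent ℝ ((↑) : ↥(τ : Set (EuclideanSpace ℝ (Fin d))) → EuclideanSpace ℝ (Fin d)) :=
  (hS.2.2.1 τ hτ).2.2

theorem affineSpan_eq_top (hS : Standing M c P 𝒟) {τ : Finset (EuclideanSpace ℝ (Fin d))}
    (hτ : τ ∈ 𝒟) : affineSpan ℝ (τ : Set (EuclideanSpace ℝ (Fin d))) = ⊤ := by
  have := (hS.affineIndependent hτ).affineSpan_eq_top_iff_card_eq_finrank_add_one
  rw [Subtype.range_coe] at this
  simp [this, (hS.2.2.1 τ hτ).1]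

theorem finite_setOf_convexHull_inter_nonempty (hS : Standing M c P 𝒟) (hM : 0 < M)
    {K : Set (EuclideanSpace ℝ (Fin d))} (hK : IsBounded K) :
    {τ ∈ 𝒟 | (convexHull ℝ (τ : Set (EuclideanSpace ℝ (Fin d))) ∩ K).Nonempty}.Finite := by
  obtain ⟨hsep, -, hcells, -, -, -, -, hsize, -⟩ := hS
  refine _root_.finite_setOf_convexHull_inter_nonempty (R := √5 * M) hM
    (fun x hx y hy hxy => hsep x hx y hy hxy) (fun τ hτ => (hcells τ hτ).2.1) (fun τ hτ => ?_) hK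
  obtain ⟨z, r, hr, hτ⟩ := hsize τ hτ
  exact ⟨z, hτ.trans (closedBall_subset_closedBall hr.le)⟩

theorem isClosed_setOf_exists_baryCoord_ge (hS : Standing M c P 𝒟) (hM : 0 < M)
    {γ : ℝ → EuclideanSpace ℝ (Fin d)} (hγ : Continuous γ) {g : ℝ → ℝ} (hg : Continuous g) :
    IsClosed {t | ∃ σ ∈ 𝒟, p ∈ σ ∧ γ t ∈ convexHull ℝ (σ : Set (EuclideanSpace ℝ (Fin d))) ∧
      g t ≤ c * M * baryCoord σ p (γ t)} := by
  have hstar : {σ ∈ 𝒟 | p ∈ σ}.Finite :=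
    (hS.finite_setOf_convexHull_inter_nonempty hM isBounded_singleton).subset
      fun σ ⟨hσ, hpσ⟩ => ⟨hσ, p, subset_convexHull ℝ _ hpσ, rfl⟩
  have : {t | ∃ σ ∈ 𝒟, p ∈ σ ∧ γ t ∈ convexHull ℝ (σ : Set (EuclideanSpace ℝ (Fin d))) ∧
      g t ≤ c * M * baryCoord σ p (γ t)} = ⋃ σ ∈ {σ ∈ 𝒟 | p ∈ σ},
        γ ⁻¹' convexHull ℝ (σ : Set (EuclideanSpace ℝ (Fin d))) ∩
          {t | g t ≤ c * M * baryCoord σ p (γ t)} := by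
    ext t
    simp [and_assoc, and_left_comm]
  rw [this]
  exact hstar.isClosed_biUnion fun σ _ =>
    ((σ.finite_toSet.isCompact_convexHull ℝ).isClosed.preimage hγ).inter <|
      isClosed_le hg <| continuous_const.mul <|
        (baryCoord σ p).continuous_of_finiteDimensional.comp hγ

theorem eventually_exists_baryCoord_ge (hS : Standing M c P 𝒟) (hM : 0 < M) (hc : 0 < c)
    {σ : Finset (EuclideanSpace ℝ (Fin d))} (hσ : σ ∈ 𝒟) (hpσ : p ∈ σ)
    {u : EuclideanSpace ℝ (Fin d)} (hu : u ∈ convexHull ℝ (σ : Set (EuclideanSpace ℝ (Fin d))))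
    (hpos : 0 < baryCoord σ p u) :
    ∀ᶠ w in 𝓝 u, ∃ σ' ∈ 𝒟, p ∈ σ' ∧ w ∈ convexHull ℝ (σ' : Set (EuclideanSpace ℝ (Fin d))) ∧
      c * M * baryCoord σ p u - dist u w ≤ c * M * baryCoord σ' p w := by
  obtain ⟨-, -, -, hcover, -, hface, -, -, hfar⟩ := id hS
  have hlf : LocallyFinite fun τ : 𝒟 => convexHull ℝ (τ : Set (EuclideanSpace ℝ (Fin d))) :=
    fun x => ⟨ball x 1, ball_mem_nhds x one_pos,
      ((hS.finite_setOf_convexHull_inter_nonempty hM isBounded_ball).preimage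
        Subtype.val_injective.injOn).subset fun τ h => ⟨τ.2, h⟩⟩
  filter_upwards [hlf.eventually_subset
    (fun τ => (τ.1.finite_toSet.isCompact_convexHull ℝ).isClosed) u] with w hw
  obtain ⟨σ', hσ', hwσ'⟩ := mem_iUnion₂.1 (hcover ▸ mem_univ w)
  have huσ' : u ∈ convexHull ℝ (σ' : Set (EuclideanSpace ℝ (Fin d))) :=
    hw (show (⟨σ', hσ'⟩ : 𝒟) ∈ {τ : 𝒟 | w ∈ convexHull ℝ (τ : Set _)} from hwσ')
  have hcoord := baryCoord_eq_of_mem_convexHull_inter (hS.affineIndependent hσ)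
    (hS.affineSpan_eq_top hσ) (hS.affineIndependent hσ') (hS.affineSpan_eq_top hσ') hpσ
    (hface σ hσ σ' hσ') hu huσ'
  have hpσ' : p ∈ σ' := by
    by_contra h
    rw [baryCoord_of_notMem h] at hcoord
    exact hpos.ne' hcoord
  have hlip := baryCoord_mul_abs_sub_le_dist (hS.affineIndependent hσ')
    (hS.affineSpan_eq_top hσ') hpσ' (hfar σ' hσ' p hpσ').le u w
  have := mul_le_mul_of_nonneg_left (le_abs_self (baryCoord σ' p u - baryCoord σ' p w))
    (mul_pos hc hM).le
  refine ⟨σ', hσ', hpσ', hwσ', ?_⟩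
  rw [hcoord]
  linarith

end Standing

theorem self_mem_Tcell {τ : Finset (EuclideanSpace ℝ (Fin d))} (hp : p ∈ τ) : p ∈ Tcell τ p :=
  ⟨fun q => if q = p then 1 else 0, fun q _ => by positivity, by simp [hp],
    fun q _ => by simp only; split_ifs <;> norm_num, by simp [hp]⟩

theorem Tcell_subset_convexHull (τ : Finset (EuclideanSpace ℝ (Fin d)))
    (p : EuclideanSpace ℝ (Fin d)) :
    Tcell τ p ⊆ convexHull ℝ (τ : Set (EuclideanSpace ℝ (Fin d))) := by
  rintro x ⟨lam, hlam0, hlam1, -, rfl⟩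
  exact (Finset.convexHull_eq _).superset
    ⟨lam, hlam0, hlam1, by simp [Finset.centerMass_eq_of_sum_1 _ _ hlam1]⟩

theorem Standing.one_le_mul_baryCoord_of_mem_Tcell (hS : Standing M c P 𝒟)
    {τ : Finset (EuclideanSpace ℝ (Fin d))} (hτ : τ ∈ 𝒟) (hpτ : p ∈ τ)
    {x : EuclideanSpace ℝ (Fin d)} (hx : x ∈ Tcell τ p) : 1 ≤ (d + 1) * baryCoord τ p x := by
  obtain ⟨lam, -, hlam1, hlamp, rfl⟩ := hx
  rw [baryCoord_sum_smul (hS.affineIndependent hτ) (hS.affineSpan_eq_top hτ) hpτ subset_rfl hlam1,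
    if_pos hpτ]
  have := Finset.sum_le_sum hlamp
  rw [hlam1, Finset.sum_const, (hS.2.2.1 τ hτ).1, nsmul_eq_mul] at this
  exact_mod_cast this

theorem Standing.ball_subset_Sset (hS : Standing M c P 𝒟) (hM : 0 < M) (hc : 0 < c)
    {τ : Finset (EuclideanSpace ℝ (Fin d))} (hτ : τ ∈ 𝒟) (hpτ : p ∈ τ)
    {x : EuclideanSpace ℝ (Fin d)} (hx : x ∈ Tcell τ p) :
    ball x (c * M / (d + 1)) ⊆ Sset 𝒟 p := by
  intro y hy
  have hxy : dist x y < c * M * baryCoord τ p x := by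
    rw [mem_ball', lt_div_iff₀ (by positivity)] at hy
    nlinarith [mul_pos hc hM, hS.one_le_mul_baryCoord_of_mem_Tcell hτ hpτ hx]
  let γ := AffineMap.lineMap (k := ℝ) x y
  let s := {t | ∃ σ ∈ 𝒟, p ∈ σ ∧ γ t ∈ convexHull ℝ (σ : Set (EuclideanSpace ℝ (Fin d))) ∧
      c * M * baryCoord τ p x - t * dist x y ≤ c * M * baryCoord σ p (γ t)}
  have hs : IsClosed s := hS.isClosed_setOf_exists_baryCoord_ge hM AffineMap.lineMap_continuous
    (continuous_const.sub (continuous_id.mul continuous_const))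
  have h0 : (0 : ℝ) ∈ s :=
    ⟨τ, hτ, hpτ, by simpa [γ] using Tcell_subset_convexHull τ p hx, by simp [γ]⟩
  have hstep : ∀ t ∈ s ∩ Ico 0 1, (s ∩ Ioc t 1).Nonempty := by
    rintro t ⟨⟨σ, hσ, hpσ, htσ, hle⟩, -, ht1⟩
    have hpos : 0 < baryCoord σ p (γ t) := by
      have : t * dist x y ≤ dist x y := mul_le_of_le_one_left dist_nonneg ht1.le
      exact pos_of_mul_pos_right (by linarith) (mul_pos hc hM).le
    have hnear := (AffineMap.lineMap_continuous.tendsto t).eventually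
      (hS.eventually_exists_baryCoord_ge hM hc hσ hpσ htσ hpos)
    obtain ⟨t', htt', ht'1, σ', hσ', hpσ', hmem, hge⟩ :=
      ((eventually_mem_nhdsWithin (a := t) (s := Ioi t)).and
        (nhdsWithin_le_nhds ((eventually_lt_nhds ht1).and hnear))).exists
    refine ⟨t', ⟨σ', hσ', hpσ', hmem, ?_⟩, htt', ht'1.le⟩
    have hdist : dist (γ t) (γ t') = (t' - t) * dist x y := by
      rw [dist_lineMap_lineMap, Real.dist_eq, abs_sub_comm, abs_of_pos (sub_pos.2 htt')]
    linarith
  obtain ⟨σ, hσ, hpσ, hyσ, -⟩ :=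
    (hs.inter isClosed_Icc).mem_of_ge_of_forall_exists_gt h0 zero_le_one hstep
  exact mem_iUnion₂.2 ⟨σ, ⟨hσ, hpσ⟩, by simpa [γ] using hyσ⟩

end Triangulation

theorem stmt14_general (M c : ℝ) (hM : 0 < M) (hc : 0 < c)
    (P : Set (EuclideanSpace ℝ (Fin d))) (𝒟 : Set (Finset (EuclideanSpace ℝ (Fin d))))
    (hS : Standing M c P 𝒟) (p : EuclideanSpace ℝ (Fin d)) (hp : p ∈ P) :
    {q : EuclideanSpace ℝ (Fin d) | Metric.infDist q (Tset 𝒟 p) < c * M / (d + 1)}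
      ⊆ interior (Sset 𝒟 p) := by
  obtain ⟨τ, hτ, hpτ⟩ := hS.2.2.2.2.2.2.1 p hp
  have hpT : p ∈ Tset 𝒟 p := mem_biUnion (x := τ) ⟨hτ, hpτ⟩ (self_mem_Tcell hpτ)
  intro q hq
  obtain ⟨x, hxT, hqx⟩ := (infDist_lt_iff ⟨p, hpT⟩).1 hq
  obtain ⟨σ, ⟨hσ, hpσ⟩, hxσ⟩ := mem_iUnion₂.1 hxT
  exact interior_maximal (hS.ball_subset_Sset hM hc hσ hpσ hxσ) isOpen_ball (mem_ball.2 hqx)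

/-- Under the standing assumptions, for every `p ∈ P` the open `cM/(d+1)`-neighbourhood
of `T(p)` is contained in the interior of `S(p)`. -/
theorem stmt14 (hd : 1 ≤ d) (M c : ℝ) (hM : 0 < M) (hc : 0 < c)
    (P : Set (EuclideanSpace ℝ (Fin d))) (𝒟 : Set (Finset (EuclideanSpace ℝ (Fin d))))
    (hS : Standing M c P 𝒟) (p : EuclideanSpace ℝ (Fin d)) (hp : p ∈ P) :
    {q : EuclideanSpace ℝ (Fin d) | Metric.infDist q (Tset 𝒟 p) < c * M / (d + 1)}
      ⊆ interior (Sset 𝒟 p) :=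
  stmt14_general M c hM hc P 𝒟 hS p hp
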